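/- Let n ≥ 1, d ≥ 2, R ≥ 1, let c_1 ∈ ℝ^n and c_i ∈ ℝ^{n^i} for i = 2,…,d with krank(c_i) ≤ R for all i = 2,…,d (with the convention c_i = 0 for i > d). For k ≥ 2 define C_k := − Σ_{i=1}^{k−1} c_i ⊗ c_{k−i} ∈ ℝ^{n^k}. Then krank(C_2) ≤ 1, and for every k ≥ 3 one has krank(C_k) ≤ (k−3) R² + 2R. -/

import Mathlib

open Matrix MeasureTheory
open scoped BigOperators Nat RealInnerProductSpace

noncomputable section

namespace LPO

/-- Multi-index representation of an index of `ℝ^{n^k}`. -/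
def mi {n k : ℕ} (m : Fin (n ^ k)) : Fin k → Fin n :=
  finFunctionFinEquiv.symm m

/-- The Kronecker product `u₁ ⊗ ⋯ ⊗ u_k ∈ ℝ^{n^k}` of `k` vectors in `ℝ^n`. -/
def vkronFam (n k : ℕ) (u : Fin k → Fin n → ℝ) : Fin (n ^ k) → ℝ :=
  fun m => ∏ i, u i (mi m i)

/-- The `k`-fold Kronecker power `x ⊗ ⋯ ⊗ x ∈ ℝ^{n^k}` of `x ∈ ℝ^n`. -/
def kpow {n : ℕ} (x : Fin n → ℝ) (k : ℕ) : Fin (n ^ k) → ℝ :=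
  fun m => ∏ i, x (mi m i)

/-- Kronecker product `ℝ^{n^a} × ℝ^{n^b} → ℝ^{n^(a+b)}`. -/
def vkron {n a b : ℕ} (u : Fin (n ^ a) → ℝ) (v : Fin (n ^ b) → ℝ) :
    Fin (n ^ (a + b)) → ℝ :=
  fun m =>
    u (finFunctionFinEquiv fun i => mi m (Fin.castAdd b i)) *
      v (finFunctionFinEquiv fun i => mi m (Fin.natAdd a i))

/-- Cast `ℝ^{n^a} → ℝ^{n^b}` along a proof that `a = b`. -/
def vcast {n a b : ℕ} (h : a = b) (v : Fin (n ^ a) → ℝ) : Fin (n ^ b) → ℝ :=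
  fun m => v (Fin.cast (by rw [h]) m)

/-- Kronecker product of `k` (square, equally sized) matrices. -/
def mkron {n : ℕ} (k : ℕ) (M : Fin k → Matrix (Fin n) (Fin n) ℝ) :
    Matrix (Fin (n ^ k)) (Fin (n ^ k)) ℝ :=
  Matrix.of fun p q => ∏ i, M i (mi p i) (mi q i)

/-- `k`-fold Kronecker power of an `n × r` matrix. -/
def mkronRect {n r : ℕ} (k : ℕ) (Q : Matrix (Fin n) (Fin r) ℝ) :
    Matrix (Fin (n ^ k)) (Fin (r ^ k)) ℝ :=
  Matrix.of fun p q => ∏ i, Q (mi p i) (mi q i)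

/-- `L_k(A) = Σ_{j=1}^k I ⊗ ⋯ ⊗ I ⊗ A ⊗ I ⊗ ⋯ ⊗ I` with `A` in the `j`-th slot. -/
def LkMat {n : ℕ} (A : Matrix (Fin n) (Fin n) ℝ) (k : ℕ) :
    Matrix (Fin (n ^ k)) (Fin (n ^ k)) ℝ :=
  ∑ j : Fin k, mkron k fun i => if i = j then A else 1

/-- All complex eigenvalues of the real matrix `A` have negative real part. -/
def StableMat {n : ℕ} (A : Matrix (Fin n) (Fin n) ℝ) : Prop :=
  ∀ z : ℂ, (A.map (algebraMap ℝ ℂ)).charpoly.IsRoot z → z.re < 0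

/-- The mode-permutation operator `P_τ` on `ℝ^{n^k}`, characterized by
`P_τ (u₁ ⊗ ⋯ ⊗ u_k) = u_{τ(1)} ⊗ ⋯ ⊗ u_{τ(k)}`. -/
def permVec {n k : ℕ} (τ : Equiv.Perm (Fin k)) (w : Fin (n ^ k) → ℝ) :
    Fin (n ^ k) → ℝ :=
  fun m => w (finFunctionFinEquiv (mi m ∘ ⇑τ⁻¹))

/-- `w ∈ ℝ^{n^k}` has Kronecker (CP) rank at most `R`. -/
def KrankLe {n k : ℕ} (w : Fin (n ^ k) → ℝ) (R : ℕ) : Prop :=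
  ∃ u : Fin R → Fin k → Fin n → ℝ, w = ∑ j, vkronFam n k (u j)

/-- The right-hand side `C_k = -Σ_{i=1}^{k-1} c_i ⊗ c_{k-i}` of the linear system for `w_k`. -/
def Cvec {n : ℕ} (c : (i : ℕ) → Fin (n ^ i) → ℝ) (k : ℕ) : Fin (n ^ k) → ℝ :=
  -(∑ i ∈ (Finset.Icc 1 (k - 1)).attach,
      vcast (show i.1 + (k - i.1) = k from by
          have := Finset.mem_Icc.mp i.2; omega)
        (vkron (c i.1) (c (k - i.1))))

/-- Euclidean norm on `ℝ^N`. -/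
def enorm {N : ℕ} (v : Fin N → ℝ) : ℝ := Real.sqrt (v ⬝ᵥ v)

/-- Spectral norm of a complex matrix: the operator norm of the induced map between
Euclidean spaces. -/
def specNorm {m : ℕ} (M : Matrix (Fin m) (Fin m) ℂ) : ℝ :=
  ‖LinearMap.toContinuousLinearMap (Matrix.toEuclideanLin M)‖

/-- Euclidean ball of radius `L` in `ℝ^n`. -/
def eball (n : ℕ) (L : ℝ) : Set (Fin n → ℝ) := {x | x ⬝ᵥ x ≤ L ^ 2}

/-- Square matricization `ℝ^{n^{2κ}} → ℝ^{n^κ × n^κ}`, characterized by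
`(u₁⊗⋯⊗u_κ)ᵀ W (v₁⊗⋯⊗v_κ) = wᵀ (u₁⊗⋯⊗u_κ⊗v₁⊗⋯⊗v_κ)`. -/
def sqMatz {n κ : ℕ} (w : Fin (n ^ (2 * κ)) → ℝ) :
    Matrix (Fin (n ^ κ)) (Fin (n ^ κ)) ℝ :=
  Matrix.of fun p q =>
    w (Fin.cast (show n ^ (κ + κ) = n ^ (2 * κ) from by rw [two_mul])
        (finFunctionFinEquiv (Fin.append (mi p) (mi q))))

end LPO

namespace LPO

/-- The low-rank right-hand side `C̃_k` (Lemma on minimal Kronecker rank). -/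
def Ctil {n : ℕ} (c : (i : ℕ) → Fin (n ^ i) → ℝ) (k : ℕ) : Fin (n ^ k) → ℝ :=
  if hk : k % 2 = 1 then
    (2 : ℝ) • ∑ i ∈ (Finset.Icc 1 (k / 2)).attach,
      vcast (show i.1 + (k - i.1) = k from by
          have := Finset.mem_Icc.mp i.2; omega)
        (vkron (c i.1) (c (k - i.1)))
  else
    vcast (show k / 2 + k / 2 = k from by omega)
        (vkron (c (k / 2)) (c (k / 2)))
      + (2 : ℝ) • ∑ i ∈ (Finset.Icc 1 (k / 2 - 1)).attach,
          vcast (show i.1 + (k - i.1) = k from by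
              have := Finset.mem_Icc.mp i.2; omega)
            (vkron (c i.1) (c (k - i.1)))

/-- Quadrature step size `h_st = π / √ℓ`. -/
def quadStep (ℓ : ℕ) : ℝ := Real.pi / Real.sqrt ℓ

/-- Quadrature node `α_i`. -/
def quadNode (k : ℕ) (lmin : ℝ) (ℓ : ℕ) (i : ℤ) : ℝ :=
  Real.log (Real.exp (i * quadStep ℓ) +
      Real.sqrt (1 + Real.exp (2 * i * quadStep ℓ))) / (k * lmin)

/-- Quadrature weight `ω_i`. -/
def quadWeight (k : ℕ) (lmin : ℝ) (ℓ : ℕ) (i : ℤ) : ℝ :=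
  quadStep ℓ / (Real.sqrt (1 + Real.exp (-2 * i * quadStep ℓ)) * (k * lmin))

/-- The quadrature-based approximation
`x_ℓ = -Σ_{i=-ℓ}^{ℓ} ω_i (exp(α_i A) ⊗ ⋯ ⊗ exp(α_i A)) b`. -/
def quadApprox {n : ℕ} (A : Matrix (Fin n) (Fin n) ℝ) (k : ℕ) (lmin : ℝ) (ℓ : ℕ)
    (b : Fin (n ^ k) → ℝ) : Fin (n ^ k) → ℝ :=
  -(∑ i ∈ Finset.Icc (-(ℓ : ℤ)) (ℓ : ℤ),
      quadWeight k lmin ℓ i •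
        (mkron k (fun _ => NormedSpace.exp (quadNode k lmin ℓ i • A)) *ᵥ b))

end LPO

/-!
A sum of `R₁` and of `R₂` Kronecker products of vectors in `ℝⁿ` has a Kronecker product with
at most `R₁ R₂` terms, so `c_i ⊗ c_{k-i}` has Kronecker rank at most `R²`, or at most `R` when
one factor is `c_1` (which, lying in `ℝⁿ`, has rank at most `1`). Summing over `i = 1, …, k-1`
gives `(k-3) R² + 2R` for `k ≥ 3` and `1` for `k = 2`; the `c_i` with `i > d` vanish and so
also have rank at most `R`.
-/

namespace LPO

variable {n : ℕ}

lemma mi_finFunctionFinEquiv {k : ℕ} (f : Fin k → Fin n) : mi (finFunctionFinEquiv f) = f :=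
  finFunctionFinEquiv.symm_apply_apply f

lemma krankLe_zero_zero {k : ℕ} : KrankLe (0 : Fin (n ^ k) → ℝ) 0 :=
  ⟨Fin.elim0, by simp⟩

lemma krankLe_zero {k : ℕ} (hk : k ≠ 0) (R : ℕ) : KrankLe (0 : Fin (n ^ k) → ℝ) R := by
  refine ⟨fun _ _ _ => 0, ?_⟩
  funext m
  simp [vkronFam, hk]

namespace KrankLe

variable {k R₁ R₂ : ℕ} {w₁ w₂ : Fin (n ^ k) → ℝ}

lemma add (h₁ : KrankLe w₁ R₁) (h₂ : KrankLe w₂ R₂) : KrankLe (w₁ + w₂) (R₁ + R₂) := by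
  obtain ⟨u, rfl⟩ := h₁
  obtain ⟨v, rfl⟩ := h₂
  exact ⟨Fin.append u v, by rw [Fin.sum_univ_add]; simp⟩

-- For `k = 0` every `vkronFam` is the constant `1`, leaving no factor to absorb the scalar.
lemma smul (hk : k ≠ 0) (a : ℝ) (h : KrankLe w₁ R₁) : KrankLe (a • w₁) R₁ := by
  obtain ⟨u, rfl⟩ := h
  let i₀ : Fin k := ⟨0, Nat.pos_of_ne_zero hk⟩
  refine ⟨fun j i => (if i = i₀ then a else 1) • u j i, ?_⟩
  funext m
  simp only [vkronFam, Pi.smul_apply, smul_eq_mul, Finset.sum_apply, Finset.mul_sum,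
    Finset.prod_mul_distrib, Finset.prod_ite_eq', Finset.mem_univ, if_true]

lemma neg (hk : k ≠ 0) (h : KrankLe w₁ R₁) : KrankLe (-w₁) R₁ := by
  simpa using h.smul hk (-1)

lemma vcast {a b R : ℕ} (hab : a = b) {w : Fin (n ^ a) → ℝ} (h : KrankLe w R) :
    KrankLe (LPO.vcast hab w) R := by
  subst hab
  exact h

end KrankLe

lemma krankLe_sum {ι : Type*} {k : ℕ} (s : Finset ι) (f : ι → Fin (n ^ k) → ℝ) (r : ι → ℕ)
    (h : ∀ i ∈ s, KrankLe (f i) (r i)) : KrankLe (∑ i ∈ s, f i) (∑ i ∈ s, r i) := by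
  induction s using Finset.cons_induction with
  | empty => simpa using krankLe_zero_zero
  | cons a s _ ih =>
    rw [Finset.sum_cons, Finset.sum_cons]
    exact (h a (Finset.mem_cons_self a s)).add
      (ih fun i hi => h i (Finset.mem_cons_of_mem hi))

lemma krankLe_one_of_order_one (w : Fin (n ^ 1) → ℝ) : KrankLe w 1 := by
  refine ⟨fun _ _ x => w (finFunctionFinEquiv fun _ => x), ?_⟩
  funext m
  have hm : (fun _ : Fin 1 => mi m 0) = mi m := funext fun i => by rw [Subsingleton.elim i 0]
  simp only [Fin.sum_univ_one, vkronFam, Fin.prod_univ_one, hm]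
  simp [mi]

lemma vkron_vkronFam {a b : ℕ} (p : Fin a → Fin n → ℝ) (q : Fin b → Fin n → ℝ) :
    vkron (vkronFam n a p) (vkronFam n b q) = vkronFam n (a + b) (Fin.append p q) := by
  funext m
  simp [vkron, vkronFam, mi_finFunctionFinEquiv, Fin.prod_univ_add]

lemma vkron_sum_sum {a b : ℕ} {ι κ : Type*} (s : Finset ι) (t : Finset κ)
    (f : ι → Fin (n ^ a) → ℝ) (g : κ → Fin (n ^ b) → ℝ) :
    vkron (∑ i ∈ s, f i) (∑ j ∈ t, g j) = ∑ i ∈ s, ∑ j ∈ t, vkron (f i) (g j) := by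
  funext m
  simp [vkron, Finset.sum_mul_sum]

lemma KrankLe.vkron {a b R₁ R₂ : ℕ} {u : Fin (n ^ a) → ℝ} {v : Fin (n ^ b) → ℝ}
    (h₁ : KrankLe u R₁) (h₂ : KrankLe v R₂) : KrankLe (LPO.vkron u v) (R₁ * R₂) := by
  obtain ⟨p, rfl⟩ := h₁
  obtain ⟨q, rfl⟩ := h₂
  refine ⟨fun j => Fin.append (p (finProdFinEquiv.symm j).1) (q (finProdFinEquiv.symm j).2), ?_⟩
  rw [vkron_sum_sum, ← finProdFinEquiv.sum_comp, Fintype.sum_prod_type]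
  simp only [Equiv.symm_apply_apply, vkron_vkronFam]

lemma krankLe_Cvec {k : ℕ} (hk : k ≠ 0) (c : (i : ℕ) → Fin (n ^ i) → ℝ) (r : ℕ → ℕ)
    (hc : ∀ i, 1 ≤ i → i < k → KrankLe (c i) (r i)) :
    KrankLe (Cvec c k) (∑ i ∈ Finset.Icc 1 (k - 1), r i * r (k - i)) := by
  rw [Cvec, ← Finset.sum_attach _ fun i => r i * r (k - i)]
  refine (krankLe_sum _ _ (fun i : Finset.Icc 1 (k - 1) => r i.1 * r (k - i.1))
    fun i _ => ?_).neg hk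
  have hi := Finset.mem_Icc.mp i.2
  exact ((hc i.1 (by omega) (by omega)).vkron (hc (k - i.1) (by omega) (by omega))).vcast _

lemma sum_Icc_ite_mul_ite {k : ℕ} (hk : 3 ≤ k) (R : ℕ) :
    ∑ i ∈ Finset.Icc 1 (k - 1), (if i = 1 then 1 else R) * (if k - i = 1 then 1 else R)
      = (k - 3) * R ^ 2 + 2 * R := by
  obtain ⟨m, rfl⟩ : ∃ m, k = m + 3 := ⟨k - 3, by omega⟩
  have hsplit : Finset.Icc 1 (m + 3 - 1) = insert 1 (insert (m + 2) (Finset.Icc 2 (m + 1))) := by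
    ext x
    simp only [Finset.mem_Icc, Finset.mem_insert]
    omega
  have hmid : ∀ i ∈ Finset.Icc 2 (m + 1),
      (if i = 1 then 1 else R) * (if m + 3 - i = 1 then 1 else R) = R ^ 2 := fun i hi => by
    have := Finset.mem_Icc.mp hi
    rw [if_neg (by omega), if_neg (by omega), sq]
  rw [hsplit, Finset.sum_insert (by simp), Finset.sum_insert (by simp), Finset.sum_congr rfl hmid,
    Finset.sum_const, Nat.card_Icc, smul_eq_mul]
  simp only [show m + 3 - 1 = m + 2 by omega, show m + 3 - (m + 2) = 1 by omega, ↓reduceIte,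
    Nat.reduceEqDiff, Nat.reduceSubDiff, one_mul, mul_one, add_tsub_cancel_right]
  ring

theorem krank_Cvec_bound_general
    {n d R : ℕ}
    (c : (i : ℕ) → Fin (n ^ i) → ℝ) (hc0 : ∀ i, d < i → c i = 0)
    (hcR : ∀ i, 2 ≤ i → i ≤ d → KrankLe (c i) R) :
    KrankLe (Cvec c 2) 1 ∧
      ∀ k, 3 ≤ k → KrankLe (Cvec c k) ((k - 3) * R ^ 2 + 2 * R) := by
  have hc : ∀ i, 1 ≤ i → KrankLe (c i) (if i = 1 then 1 else R) := by
    intro i hi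
    by_cases hi1 : i = 1
    · subst hi1
      simpa using krankLe_one_of_order_one (c 1)
    by_cases hid : i ≤ d
    · simpa [hi1] using hcR i (by omega) hid
    · simpa [hi1, hc0 i (by omega)] using krankLe_zero (n := n) (k := i) (by omega) R
  refine ⟨?_, fun k hk => ?_⟩
  · simpa using krankLe_Cvec two_ne_zero c _ fun i hi _ => hc i hi
  · rw [← sum_Icc_ite_mul_ite hk]
    exact krankLe_Cvec (by omega) c _ fun i hi _ => hc i hi

/-- If `krank(c_i) ≤ R` for `i = 2,…,d` (and `c_i = 0` for `i > d`),
then the right-hand side `C_k = -Σ_{i=1}^{k-1} c_i ⊗ c_{k-i}` satisfies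
`krank(C_2) ≤ 1` and `krank(C_k) ≤ (k-3)R² + 2R` for all `k ≥ 3`. -/
theorem krank_Cvec_bound
    {n d R : ℕ} (hn : 1 ≤ n) (hd : 2 ≤ d) (hR : 1 ≤ R)
    (c : (i : ℕ) → Fin (n ^ i) → ℝ) (hc0 : ∀ i, d < i → c i = 0)
    (hcR : ∀ i, 2 ≤ i → i ≤ d → KrankLe (c i) R) :
    KrankLe (Cvec c 2) 1 ∧
      ∀ k, 3 ≤ k → KrankLe (Cvec c k) ((k - 3) * R ^ 2 + 2 * R) :=
  krank_Cvec_bound_general c hc0 hcR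

end LPO
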